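/- For a regular ω-poset P, the maps x(S) = S_∧ = {p : p ∧ s for all s ∈ S} and s(X) = X^⊲ = {q : ∃x ∈ X, x ⊲ q} are mutually inverse homeomorphisms between the spectrum SP (minimal selectors, with open subbasis p_S) and the clique-spectrum XP (unbounded maximal cliques with respect to adjacency ⌅, with closed subbasis p_X = {X : p ∈ X}). -/

import Mathlib

namespace OP

section OmegaPoset

variable (P : Type*) [PartialOrder P]

/-- The n-th cone of the poset: `cone 0` is the set of maximal elements. -/
def cone : ℕ → Set P
  | 0 => {p | ∀ q, ¬ p < q}
  | n + 1 => {p | ∀ q, p < q → q ∈ cone n}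

/-- The n-th level: atoms (minimal elements) of the n-th cone. -/
def level (n : ℕ) : Set P := {p | p ∈ cone P n ∧ ∀ q, q < p → q ∉ cone P n}

/-- An ω-poset: all levels finite and every element in some cone. -/
def IsOmegaPoset : Prop := (∀ n, (level P n).Finite) ∧ ∀ p : P, ∃ n, p ∈ cone P n

variable {P}

/-- `refines A C` : every element of `A` lies below some element of `C` (`A ≤ C`). -/
def refines (A C : Set P) : Prop := ∀ a ∈ A, ∃ c ∈ C, a ≤ c

/-- A cap is a subset refined by some level. -/
def IsCap (C : Set P) : Prop := ∃ n, refines (level P n) C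

/-- A selector meets every cap. -/
def IsSelector (S : Set P) : Prop := ∀ C : Set P, IsCap C → (S ∩ C).Nonempty

/-- `wedge p q` : `p` and `q` have a common lower bound. -/
def wedge (p q : P) : Prop := ∃ r, r ≤ p ∧ r ≤ q

def wedgeSet (p : P) : Set P := {q | wedge p q}

/-- The adjacency relation `p ⌅ q`. -/
def barwedge (p q : P) : Prop := ∀ C : Set P, IsCap C → ∃ c ∈ C, wedge p c ∧ wedge c q

/-- `p ⊲_C q`. -/
def starBelowOn (C : Set P) (p q : P) : Prop := ∀ c ∈ C, wedge p c → c ≤ q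

/-- The star-below relation `p ⊲ q`. -/
def starBelow (p q : P) : Prop := ∃ n, starBelowOn (level P n) p q

/-- A clique: pairwise adjacent set. -/
def IsClique (X : Set P) : Prop := ∀ p ∈ X, ∀ q ∈ X, barwedge p q

/-- Unbounded subset: meets `C^≥` for every cap `C`. -/
def IsUnbounded (X : Set P) : Prop := ∀ C : Set P, IsCap C → ∃ u ∈ X, ∃ c ∈ C, u ≤ c

variable (P)

/-- Regularity: every level is eventually star-refined by a later level. -/
def IsRegular : Prop :=
  ∀ m, ∃ n, m < n ∧ ∀ p ∈ level P n, ∃ q ∈ level P m, starBelow p q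

/-- The spectrum: minimal selectors. -/
def Spec : Set (Set P) := {S | IsSelector S ∧ ∀ T ⊆ S, IsSelector T → T = S}

def SpecT : Type _ := {S : Set P // S ∈ Spec P}

instance : TopologicalSpace (SpecT P) :=
  TopologicalSpace.generateFrom {U | ∃ p : P, U = {S : SpecT P | p ∈ S.1}}

/-- The clique-spectrum: unbounded maximal cliques. -/
def CliqueSpec : Set (Set P) :=
  {X | IsUnbounded X ∧ IsClique X ∧ ∀ Y : Set P, IsClique Y → X ⊆ Y → Y = X}

def CliqueSpecT : Type _ := {X : Set P // X ∈ CliqueSpec P}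

instance : TopologicalSpace (CliqueSpecT P) :=
  TopologicalSpace.generateFrom {U | ∃ p : P, U = {X : CliqueSpecT P | p ∉ X.1}}

variable {P}

/-- The basic open set `p_S`. -/
def pSOpen (p : P) : Set (SpecT P) := {S | p ∈ S.1}

/-- The closed set `p̄_S = {S : S ⊆ p^∧}`. -/
def pSBar (p : P) : Set (SpecT P) := {S | S.1 ⊆ wedgeSet p}

/-- Prime ω-poset: every basic open set is nonempty. -/
def IsPrimePoset (P : Type*) [PartialOrder P] : Prop := ∀ p : P, (pSOpen p).Nonempty

end OmegaPoset

end OP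

/-!
A minimal selector `S` is one in which every `s ∈ S` is the only element of `S` in some cap.
Playing two such caps against each other shows that `S` is directed, and regularity then puts,
below every `s ∈ S`, some `u ∈ S` with `u ⊲ s`; conversely a selector contains every `q` with
`x ⊲ q` for an `x` compatible with all of `S`, because `q` together with the level elements
incompatible with `x` forms a cap. Adjacency to an element that is star-below `s` already forces
`∧`-compatibility with `s`, so `S_∧ = S_⌅` is a maximal clique, and the same two facts show that
`X^⊲` is a minimal selector and that the two constructions are mutually inverse.

For continuity, `p ∉ S_∧` is witnessed by a single `s ∈ S`, an open condition on `S`. If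
`u' ⊲ u ⊲ p` inside `X^⊲`, with `u' ⊲ u` witnessed by level `j`, then every unbounded maximal
clique `Y` avoiding the finitely many elements of level `j` incompatible with `u'` contains some
`l ≤ u` of level `j`, whence `p ∈ Y^⊲`; this is a finite intersection of subbasic open sets.
-/

namespace OP

variable {P : Type*} [PartialOrder P]

section Levels

theorem cone_subset_cone_succ (n : ℕ) : cone P n ⊆ cone P (n + 1) := by
  induction n with
  | zero => exact fun p hp q hq => (hp q hq).elim
  | succ n ih => exact fun p hp q hq => ih (hp q hq)

theorem cone_mono : Monotone (cone P) := monotone_nat_of_le_succ cone_subset_cone_succ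

noncomputable def coneRank (p : P) : ℕ := sInf {n | p ∈ cone P n}

theorem mem_cone_coneRank {p : P} {n : ℕ} (h : p ∈ cone P n) : p ∈ cone P (coneRank p) :=
  Nat.sInf_mem (s := {n | p ∈ cone P n}) ⟨n, h⟩

theorem coneRank_le {p : P} {n : ℕ} (h : p ∈ cone P n) : coneRank p ≤ n := Nat.sInf_le h

theorem coneRank_lt_of_lt {p q : P} {n : ℕ} (hp : p ∈ cone P n) (hpq : p < q) :
    coneRank q < coneRank p := by
  have hp' := mem_cone_coneRank hp
  rcases hr : coneRank p with _ | m
  · rw [hr] at hp'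
    exact (hp' q hpq).elim
  · rw [hr] at hp'
    exact Nat.lt_succ_of_le (coneRank_le (hp' q hpq))

theorem exists_mem_level_le {k : ℕ} {p : P} (hp : p ∈ cone P k) : ∃ c ∈ level P k, c ≤ p := by
  obtain ⟨c, ⟨hc, hcp⟩, hmin⟩ := (measure fun b : P => k - coneRank b).wf.has_min
    {b | b ∈ cone P k ∧ b ≤ p} ⟨p, hp, le_rfl⟩
  refine ⟨c, ⟨hc, fun b hbc hb => hmin b ⟨hb, hbc.le.trans hcp⟩ ?_⟩, hcp⟩
  have hrank := coneRank_lt_of_lt hb hbc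
  have hb_le := coneRank_le hb
  show k - coneRank b < k - coneRank c
  omega

theorem exists_mem_level_lt {n : ℕ} {a : P} (ha : a ∈ cone P (n + 1)) (han : a ∉ cone P n) :
    ∃ c ∈ level P n, a < c := by
  by_contra! H
  have hbelow : ∀ q, a < q → ∃ b < q, b ∈ cone P n := fun q hq => by
    by_contra! h
    exact H q ⟨ha q hq, h⟩ hq
  -- `hb q hbq` says `q ∈ cone P (n - 1)`, or is absurd when `n = 0`: either way `a ∈ cone P n`.
  cases n <;> exact han fun q hq => let ⟨b, hbq, hb⟩ := hbelow q hq; hb q hbq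

theorem refines_refl (A : Set P) : refines A A := fun a ha => ⟨a, ha, le_rfl⟩

theorem refines.trans {A B C : Set P} (hAB : refines A B) (hBC : refines B C) : refines A C :=
  fun a ha =>
    let ⟨b, hb, hab⟩ := hAB a ha
    let ⟨c, hc, hbc⟩ := hBC b hb
    ⟨c, hc, hab.trans hbc⟩

theorem refines_level_succ (n : ℕ) : refines (level P (n + 1)) (level P n) := by
  intro a ha
  by_cases han : a ∈ cone P n
  · exact ⟨a, ⟨han, fun b hb hbn => ha.2 b hb (cone_subset_cone_succ n hbn)⟩, le_rfl⟩
  · obtain ⟨c, hc, hac⟩ := exists_mem_level_lt ha.1 han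
    exact ⟨c, hc, hac.le⟩

theorem refines_level_of_le {m n : ℕ} (h : n ≤ m) : refines (level P m) (level P n) := by
  induction m, h using Nat.le_induction with
  | base => exact refines_refl _
  | succ m _ ih => exact (refines_level_succ m).trans ih

theorem isCap_level (n : ℕ) : IsCap (level P n) := ⟨n, refines_refl _⟩

theorem IsCap.exists_forall_ge_refines {C : Set P} (hC : IsCap C) :
    ∃ n, ∀ m ≥ n, refines (level P m) C :=
  let ⟨n, hn⟩ := hC
  ⟨n, fun _ hm => (refines_level_of_le hm).trans hn⟩

theorem IsCap.exists_level_starBelow (hreg : IsRegular P) {C : Set P} (hC : IsCap C) :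
    ∃ n, ∀ l ∈ level P n, ∃ c ∈ C, starBelow l c := by
  obtain ⟨m, hm⟩ := hC
  obtain ⟨n, -, hn⟩ := hreg m
  refine ⟨n, fun l hl => ?_⟩
  obtain ⟨q, hq, ⟨k, hk⟩⟩ := hn l hl
  obtain ⟨c, hc, hqc⟩ := hm q hq
  exact ⟨c, hc, k, fun d hd hld => (hk d hd hld).trans hqc⟩

end Levels

section Relations

theorem wedge.symm {p q : P} (h : wedge p q) : wedge q p :=
  let ⟨r, hp, hq⟩ := h
  ⟨r, hq, hp⟩

theorem wedge.mono_left {p p' q : P} (h : wedge p q) (hp : p ≤ p') : wedge p' q :=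
  let ⟨r, hrp, hrq⟩ := h
  ⟨r, hrp.trans hp, hrq⟩

theorem barwedge_of_wedge (hcone : ∀ p : P, ∃ n, p ∈ cone P n) {p q : P} (h : wedge p q) :
    barwedge p q := by
  obtain ⟨r, hrp, hrq⟩ := h
  intro C hC
  obtain ⟨n, hn⟩ := hC.exists_forall_ge_refines
  obtain ⟨k, hk⟩ := hcone r
  obtain ⟨l, hl, hlr⟩ := exists_mem_level_le (cone_mono (le_max_right n k) hk)
  obtain ⟨c, hc, hlc⟩ := hn _ (le_max_left n k) l hl
  exact ⟨c, hc, ⟨l, hlr.trans hrp, hlc⟩, l, hlc, hlr.trans hrq⟩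

theorem starBelow.mono_left {p p' q : P} (h : starBelow p' q) (hp : p ≤ p') : starBelow p q :=
  let ⟨n, hn⟩ := h
  ⟨n, fun c hc hpc => hn c hc (hpc.mono_left hp)⟩

theorem wedge_of_barwedge_of_starBelow {y u q : P} (hyu : barwedge y u) (huq : starBelow u q) :
    wedge y q := by
  obtain ⟨k, hk⟩ := huq
  obtain ⟨c, hc, ⟨r, hry, hrc⟩, hcu⟩ := hyu (level P k) (isCap_level k)
  exact ⟨r, hry, hrc.trans (hk c hc hcu.symm)⟩

theorem isCap_insert_setOf_not_wedge {k : ℕ} {x q : P} (h : starBelowOn (level P k) x q) :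
    IsCap (insert q {d | d ∈ level P k ∧ ¬ wedge x d}) := by
  refine ⟨k, fun d hd => ?_⟩
  by_cases hxd : wedge x d
  · exact ⟨q, Set.mem_insert q _, h d hd hxd⟩
  · exact ⟨d, Set.mem_insert_of_mem q ⟨hd, hxd⟩, le_rfl⟩

theorem IsSelector.mem_of_starBelow {S : Set P} (hS : IsSelector S) {x q : P}
    (hx : ∀ s ∈ S, wedge x s) (hxq : starBelow x q) : q ∈ S := by
  obtain ⟨k, hk⟩ := hxq
  obtain ⟨e, heS, rfl | ⟨-, hxe⟩⟩ := hS _ (isCap_insert_setOf_not_wedge hk)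
  · exact heS
  · exact absurd (hx e heS) hxe

end Relations

section Spectrum

theorem mem_spec_iff {S : Set P} :
    S ∈ Spec P ↔ IsSelector S ∧ ∀ s ∈ S, ∃ C, IsCap C ∧ S ∩ C = {s} := by
  refine ⟨fun hS => ⟨hS.1, fun s hs => ?_⟩, fun ⟨hS, hisol⟩ => ⟨hS, fun T hTS hT => ?_⟩⟩
  · have hnot : ¬ IsSelector (S \ {s}) := fun h => by
      have hs' : s ∈ S \ {s} := by rwa [hS.2 _ Set.sdiff_subset h]
      exact hs'.2 rfl
    simp only [IsSelector, not_forall, Set.not_nonempty_iff_eq_empty] at hnot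
    obtain ⟨C, hC, hSC⟩ := hnot
    refine ⟨C, hC, Set.eq_singleton_iff_nonempty_unique_mem.2 ⟨hS.1 C hC, fun x hx => ?_⟩⟩
    by_contra hxs
    exact hSC.subset ⟨⟨hx.1, hxs⟩, hx.2⟩
  · refine hTS.antisymm fun s hs => ?_
    obtain ⟨C, hC, hSC⟩ := hisol s hs
    obtain ⟨t, htT, htC⟩ := hT C hC
    obtain rfl : t = s := hSC.subset ⟨hTS htT, htC⟩
    exact htT

theorem exists_le_le_of_mem_spec {S : Set P} (hS : S ∈ Spec P) {s t : P} (hs : s ∈ S)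
    (ht : t ∈ S) : ∃ x ∈ S, x ≤ s ∧ x ≤ t := by
  obtain ⟨Cs, hCs, hSCs⟩ := (mem_spec_iff.1 hS).2 s hs
  obtain ⟨Ct, hCt, hSCt⟩ := (mem_spec_iff.1 hS).2 t ht
  obtain ⟨ns, hns⟩ := hCs.exists_forall_ge_refines
  obtain ⟨nt, hnt⟩ := hCt.exists_forall_ge_refines
  have hD : IsCap (Cs \ {s} ∪ Ct \ {t} ∪ {x | x ≤ s ∧ x ≤ t}) := by
    refine ⟨max ns nt, fun p hp => ?_⟩
    obtain ⟨c, hc, hpc⟩ := hns _ (le_max_left _ _) p hp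
    obtain ⟨c', hc', hpc'⟩ := hnt _ (le_max_right _ _) p hp
    by_cases hcs : c = s
    · by_cases hct : c' = t
      · exact ⟨p, Or.inr ⟨hcs ▸ hpc, hct ▸ hpc'⟩, le_rfl⟩
      · exact ⟨c', Or.inl (Or.inr ⟨hc', hct⟩), hpc'⟩
    · exact ⟨c, Or.inl (Or.inl ⟨hc, hcs⟩), hpc⟩
  obtain ⟨x, hxS, (⟨hxC, hxs⟩ | ⟨hxC, hxt⟩) | hx⟩ := hS.1 _ hD
  · exact absurd (hSCs.subset ⟨hxS, hxC⟩) hxs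
  · exact absurd (hSCt.subset ⟨hxS, hxC⟩) hxt
  · exact ⟨x, hxS, hx⟩

theorem wedge_of_mem_spec {S : Set P} (hS : S ∈ Spec P) {s t : P} (hs : s ∈ S) (ht : t ∈ S) :
    wedge s t :=
  let ⟨x, _, hxs, hxt⟩ := exists_le_le_of_mem_spec hS hs ht
  ⟨x, hxs, hxt⟩

theorem exists_starBelow_of_mem_spec (hreg : IsRegular P) {S : Set P} (hS : S ∈ Spec P)
    {s : P} (hs : s ∈ S) : ∃ u ∈ S, starBelow u s := by
  obtain ⟨C, hC, hSC⟩ := (mem_spec_iff.1 hS).2 s hs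
  obtain ⟨n, hn⟩ := hC.exists_level_starBelow hreg
  obtain ⟨u, huS, hu⟩ := hS.1 _ (isCap_level n)
  obtain ⟨c, hcC, huc⟩ := hn u hu
  have hcS : c ∈ S := hS.1.mem_of_starBelow (fun t ht => wedge_of_mem_spec hS huS ht) huc
  obtain rfl : c = s := hSC.subset ⟨hcS, hcC⟩
  exact ⟨u, huS, huc⟩

theorem wedge_of_barwedge_of_mem_spec (hreg : IsRegular P) {S : Set P} (hS : S ∈ Spec P)
    {y s : P} (hy : ∀ s ∈ S, barwedge y s) (hs : s ∈ S) : wedge y s :=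
  let ⟨u, huS, hus⟩ := exists_starBelow_of_mem_spec hreg hS hs
  wedge_of_barwedge_of_starBelow (hy u huS) hus

end Spectrum

section Correspondence

def toClique (S : Set P) : Set P := {p | ∀ s ∈ S, wedge p s}

def toSelector (X : Set P) : Set P := {q | ∃ x ∈ X, starBelow x q}

theorem IsSelector.isClique_toClique {S : Set P} (hS : IsSelector S) : IsClique (toClique S) :=
  fun _ hp _ hq C hC =>
    let ⟨s, hsS, hsC⟩ := hS C hC
    ⟨s, hsC, hp s hsS, (hq s hsS).symm⟩

theorem subset_toClique {S : Set P} (hS : S ∈ Spec P) : S ⊆ toClique S :=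
  fun _ hs _ ht => wedge_of_mem_spec hS hs ht

theorem toClique_mem_cliqueSpec (hreg : IsRegular P) {S : Set P} (hS : S ∈ Spec P) :
    toClique S ∈ CliqueSpec P := by
  refine ⟨fun C hC => ?_, hS.1.isClique_toClique, fun Y hY hSY => hSY.antisymm' ?_⟩
  · obtain ⟨s, hsS, hsC⟩ := hS.1 C hC
    exact ⟨s, subset_toClique hS hsS, s, hsC, le_rfl⟩
  · exact fun y hy s hs => wedge_of_barwedge_of_mem_spec hreg hS
      (fun t ht => hY y hy t (hSY (subset_toClique hS ht))) hs

theorem toClique_eq_setOf_barwedge (hcone : ∀ p : P, ∃ n, p ∈ cone P n) (hreg : IsRegular P)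
    {S : Set P} (hS : S ∈ Spec P) : toClique S = {p | ∀ s ∈ S, barwedge p s} :=
  Set.ext fun _ => ⟨fun hp s hs => barwedge_of_wedge hcone (hp s hs),
    fun hp _ => wedge_of_barwedge_of_mem_spec hreg hS hp⟩

theorem subset_toClique_toSelector {X : Set P} (hX : IsClique X) :
    X ⊆ toClique (toSelector X) :=
  fun x hx _ ⟨x', hx', hx'q⟩ => wedge_of_barwedge_of_starBelow (hX x hx x' hx') hx'q

theorem toSelector_mem_spec (hreg : IsRegular P) {X : Set P} (hX : X ∈ CliqueSpec P) :
    toSelector X ∈ Spec P := by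
  refine mem_spec_iff.2 ⟨fun C hC => ?_, fun q hq => ?_⟩
  · obtain ⟨n, hn⟩ := hC.exists_level_starBelow hreg
    obtain ⟨u, huX, l, hl, hul⟩ := hX.1 _ (isCap_level n)
    obtain ⟨c, hcC, hlc⟩ := hn l hl
    exact ⟨c, ⟨u, huX, hlc.mono_left hul⟩, hcC⟩
  · obtain ⟨x, hxX, k, hk⟩ := hq
    refine ⟨_, isCap_insert_setOf_not_wedge hk, Set.eq_singleton_iff_unique_mem.2
      ⟨⟨⟨x, hxX, k, hk⟩, Set.mem_insert q _⟩, ?_⟩⟩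
    rintro e ⟨he, rfl | ⟨-, hxe⟩⟩
    · rfl
    · exact absurd (subset_toClique_toSelector hX.2.1 hxX e he) hxe

theorem toSelector_toClique (hreg : IsRegular P) {S : Set P} (hS : S ∈ Spec P) :
    toSelector (toClique S) = S :=
  Set.ext fun _ => ⟨fun ⟨_, hx, hxq⟩ => hS.1.mem_of_starBelow hx hxq, fun hq =>
    let ⟨u, huS, huq⟩ := exists_starBelow_of_mem_spec hreg hS hq
    ⟨u, subset_toClique hS huS, huq⟩⟩

theorem toClique_toSelector (hreg : IsRegular P) {X : Set P} (hX : X ∈ CliqueSpec P) :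
    toClique (toSelector X) = X :=
  hX.2.2 _ (toSelector_mem_spec hreg hX |>.1.isClique_toClique)
    (subset_toClique_toSelector hX.2.1)

theorem mem_of_le_of_mem_cliqueSpec (hreg : IsRegular P) {X : Set P} (hX : X ∈ CliqueSpec P)
    {v q : P} (hv : v ∈ X) (hvq : v ≤ q) : q ∈ X := by
  rw [← toClique_toSelector hreg hX] at hv ⊢
  exact fun s hs => (hv s hs).mono_left hvq

end Correspondence

section Topology

theorem isOpen_pSOpen (p : P) : IsOpen (pSOpen p) :=
  TopologicalSpace.isOpen_generateFrom_of_mem ⟨p, rfl⟩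

theorem isOpen_setOf_not_mem (p : P) : IsOpen {X : CliqueSpecT P | p ∉ X.1} :=
  TopologicalSpace.isOpen_generateFrom_of_mem ⟨p, rfl⟩

theorem isOpen_setOf_not_mem_toClique (p : P) : IsOpen {S : SpecT P | p ∉ toClique S.1} := by
  have h : {S : SpecT P | p ∉ toClique S.1} = ⋃ (s : P) (_ : ¬ wedge p s), pSOpen s := by
    ext S
    simp [toClique, pSOpen, and_comm]
  rw [h]
  exact isOpen_iUnion fun s => isOpen_iUnion fun _ => isOpen_pSOpen s

theorem isOpen_setOf_mem_toSelector (hfin : ∀ n, (level P n).Finite) (hreg : IsRegular P)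
    (p : P) : IsOpen {X : CliqueSpecT P | p ∈ toSelector X.1} := by
  refine isOpen_iff_forall_mem_open.2 fun X hX => ?_
  have hXspec := toSelector_mem_spec hreg X.2
  obtain ⟨u, hu, hup⟩ := exists_starBelow_of_mem_spec hreg hXspec hX
  obtain ⟨u', hu', j, hj⟩ := exists_starBelow_of_mem_spec hreg hXspec hu
  refine ⟨⋂ d ∈ {d | d ∈ level P j ∧ ¬ wedge u' d}, {Y | d ∉ Y.1}, fun Y hY => ?_,
    ((hfin j).subset fun d hd => hd.1).isOpen_biInter fun d _ => isOpen_setOf_not_mem d, ?_⟩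
  · simp only [Set.mem_iInter] at hY
    obtain ⟨v, hvY, l, hl, hvl⟩ := Y.2.1 _ (isCap_level j)
    have hlY : l ∈ Y.1 := mem_of_le_of_mem_cliqueSpec hreg Y.2 hvY hvl
    have hu'l : wedge u' l := by
      by_contra h
      exact hY l ⟨hl, h⟩ hlY
    exact ⟨l, hlY, hup.mono_left (hj l hl hu'l)⟩
  · simp only [Set.mem_iInter]
    rintro d ⟨-, hu'd⟩ hdX
    exact hu'd (subset_toClique_toSelector X.2.2.1 hdX u' hu').symm

def specHomeomorph (hfin : ∀ n, (level P n).Finite) (hreg : IsRegular P) :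
    SpecT P ≃ₜ CliqueSpecT P where
  toFun S := ⟨toClique S.1, toClique_mem_cliqueSpec hreg S.2⟩
  invFun X := ⟨toSelector X.1, toSelector_mem_spec hreg X.2⟩
  left_inv S := Subtype.ext (toSelector_toClique hreg S.2)
  right_inv X := Subtype.ext (toClique_toSelector hreg X.2)
  continuous_toFun := continuous_generateFrom_iff.2 <| by
    rintro _ ⟨p, rfl⟩
    exact isOpen_setOf_not_mem_toClique p
  continuous_invFun := continuous_generateFrom_iff.2 <| by
    rintro _ ⟨p, rfl⟩
    exact isOpen_setOf_mem_toSelector hfin hreg p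

end Topology

end OP

open OP in
/-- For a regular ω-poset, `S ↦ S_∧ = S_⌅` and `X ↦ X^⊲` are mutually inverse
homeomorphisms between the spectrum and the clique-spectrum. -/
theorem stmt5 {P : Type*} [PartialOrder P] (hP : IsOmegaPoset P) (hreg : IsRegular P) :
    ∃ f : SpecT P ≃ₜ CliqueSpecT P,
      (∀ S : SpecT P, (f S).1 = {p | ∀ s ∈ S.1, wedge p s} ∧
        (f S).1 = {p | ∀ s ∈ S.1, barwedge p s}) ∧
      ∀ X : CliqueSpecT P, (f.symm X).1 = {q | ∃ x ∈ X.1, starBelow x q} :=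
  ⟨specHomeomorph hP.1 hreg, fun S => ⟨rfl, toClique_eq_setOf_barwedge hP.2 hreg S.2⟩,
    fun _ => rfl⟩
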